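/- Let Φ be a simply laced finite crystallographic root system with positive roots Φ⁺. If β, β′ ∈ Φ⁺ are such that β′ − β is a sum of positive roots, then β′ − β can be written as a sum of pairwise orthogonal positive roots. -/
import Mathlib


open scoped RealInnerProductSpace

/-- A finite crystallographic root system in a real inner product space. -/
structure IsRootSystem {V : Type*} [NormedAddCommGroup V] [InnerProductSpace ℝ V]
    (Φ : Set V) : Prop where
  finite : Φ.Finite
  ne_zero : ∀ α ∈ Φ, α ≠ (0 : V)
  neg_mem : ∀ α ∈ Φ, -α ∈ Φ
  reflect_mem : ∀ α ∈ Φ, ∀ β ∈ Φ, β - (2 * ⟪β, α⟫ / ⟪α, α⟫) • α ∈ Φ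
  crystallographic : ∀ α ∈ Φ, ∀ β ∈ Φ, ∃ n : ℤ, 2 * ⟪β, α⟫ / ⟪α, α⟫ = (n : ℝ)

/-- A choice of positive roots for a root system. -/
structure IsPositiveSystem {V : Type*} [NormedAddCommGroup V] [InnerProductSpace ℝ V]
    (Φ pos : Set V) : Prop where
  subset : pos ⊆ Φ
  mem_or_neg_mem : ∀ α ∈ Φ, α ∈ pos ∨ -α ∈ pos
  not_both : ∀ α ∈ pos, -α ∉ pos
  add_mem : ∀ α ∈ pos, ∀ β ∈ pos, α + β ∈ Φ → α + β ∈ pos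

section Aux

variable {V : Type*} [NormedAddCommGroup V] [InnerProductSpace ℝ V]

lemma aux_inner_list_sum (l : List V) (a : V) :
    ⟪l.sum, a⟫ = (l.map fun x => (⟪x, a⟫ : ℝ)).sum := by
  induction l with
  | nil => simp
  | cons x xs ih => simp [inner_add_left, ih]

lemma aux_inner_le {x y : V} {c : ℝ} (hx : ⟪x, x⟫ = c) (hy : ⟪y, y⟫ = c) :
    ⟪x, y⟫ ≤ c ∧ (⟪x, y⟫ = c → x = y) := by
  have h0 : (0:ℝ) ≤ ⟪x - y, x - y⟫ := real_inner_self_nonneg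
  rw [real_inner_sub_sub_self, hx, hy] at h0
  refine ⟨by linarith, fun he => ?_⟩
  have hz : ⟪x - y, x - y⟫ = 0 := by
    rw [real_inner_sub_sub_self, hx, hy, he]; ring
  have := inner_self_eq_zero.mp hz
  exact sub_eq_zero.mp this

lemma aux_neg_le_inner {x y : V} {c : ℝ} (hx : ⟪x, x⟫ = c) (hy : ⟪y, y⟫ = c) :
    -c ≤ ⟪x, y⟫ ∧ (⟪x, y⟫ = -c → x = -y) := by
  have h0 : (0:ℝ) ≤ ⟪x + y, x + y⟫ := real_inner_self_nonneg
  rw [real_inner_add_add_self, hx, hy] at h0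
  refine ⟨by linarith, fun he => ?_⟩
  have hz : ⟪x + y, x + y⟫ = 0 := by
    rw [real_inner_add_add_self, hx, hy, he]; ring
  have := inner_self_eq_zero.mp hz
  linear_combination (norm := module) this

end Aux

/-- In a simply laced root system, if `β' - β` is a sum of positive roots, then it is a
sum of pairwise orthogonal positive roots. -/
theorem stmt1 {V : Type*} [NormedAddCommGroup V] [InnerProductSpace ℝ V]
    (Φ pos : Set V) (hΦ : IsRootSystem Φ) (hpos : IsPositiveSystem Φ pos)
    (hSimplyLaced : ∀ α ∈ Φ, ∀ β ∈ Φ, ⟪α, α⟫ = ⟪β, β⟫)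
    (β β' : V) (hβ : β ∈ pos) (hβ' : β' ∈ pos)
    (h : ∃ l : List V, l ≠ [] ∧ (∀ γ ∈ l, γ ∈ pos) ∧ l.sum = β' - β) :
    ∃ l : List V, l ≠ [] ∧ (∀ γ ∈ l, γ ∈ pos) ∧
      l.Pairwise (fun x y => ⟪x, y⟫ = 0) ∧ l.sum = β' - β := by
  classical
  obtain ⟨l0, hne0, hmem0, hsum0⟩ := h
  have hβΦ : β ∈ Φ := hpos.subset hβ
  have hβ'Φ : β' ∈ Φ := hpos.subset hβ'
  set c : ℝ := ⟪β, β⟫ with hc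
  have hnorm : ∀ α ∈ Φ, ⟪α, α⟫ = c := fun α hα => hSimplyLaced α hα β hβΦ
  have hcpos : 0 < c := by
    have h0 : (0:ℝ) ≤ ⟪β, β⟫ := real_inner_self_nonneg
    rcases h0.lt_or_eq with h1 | h1
    · exact h1
    · exact absurd (inner_self_eq_zero.mp h1.symm) (hΦ.ne_zero β hβΦ)
  -- integrality: for roots x, y, 2⟪x,y⟫ is an integer multiple of c
  have hint : ∀ x ∈ Φ, ∀ y ∈ Φ, ∃ n : ℤ, 2 * ⟪x, y⟫ = (n : ℝ) * c := by
    intro x hx y hy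
    obtain ⟨n, hn⟩ := hΦ.crystallographic y hy x hx
    refine ⟨n, ?_⟩
    rw [hnorm y hy] at hn
    field_simp at hn
    linarith [hn]
  -- merging lemma: two positive roots with negative inner product sum to a positive root
  have hmerge : ∀ x ∈ pos, ∀ y ∈ pos, ⟪x, y⟫ < 0 → x + y ∈ pos := by
    intro x hx y hy hxy
    have hxΦ : x ∈ Φ := hpos.subset hx
    have hyΦ : y ∈ Φ := hpos.subset hy
    obtain ⟨n, hn⟩ := hint x hxΦ y hyΦ
    have hxny : x ≠ -y := by
      rintro rfl; exact hpos.not_both y hy (by simpa using hx)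
    have hgt : -c < ⟪x, y⟫ := by
      rcases (aux_neg_le_inner (hnorm x hxΦ) (hnorm y hyΦ)).1.lt_or_eq with h1 | h1
      · exact h1
      · exact absurd ((aux_neg_le_inner (hnorm x hxΦ) (hnorm y hyΦ)).2 h1.symm) hxny
    have hn1 : (n : ℝ) = -1 := by
      have h2 : (n : ℝ) * c < 0 := by rw [← hn]; linarith
      have h3 : -2 * c < (n : ℝ) * c := by rw [← hn]; linarith
      have hnlt : (n : ℝ) < 0 := by
        by_contra hcon
        push_neg at hcon
        nlinarith
      have hngt : (-2 : ℝ) < (n : ℝ) := by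
        by_contra hcon
        push_neg at hcon
        nlinarith
      have hnlt' : n < 0 := by exact_mod_cast hnlt
      have hngt' : (-2 : ℤ) < n := by exact_mod_cast hngt
      have : n = -1 := by omega
      exact_mod_cast this
    have hscal : 2 * ⟪x, y⟫ / ⟪y, y⟫ = -1 := by
      rw [hn, hnorm y hyΦ, hn1]
      field_simp
    have hrefl := hΦ.reflect_mem y hyΦ x hxΦ
    rw [hscal] at hrefl
    have : x + y ∈ Φ := by
      have : x - (-1 : ℝ) • y = x + y := by module
      rwa [this] at hrefl
    exact hpos.add_mem x hx y hy this
  suffices H : ∀ n : ℕ, ∀ l : List V, l.length ≤ n → l ≠ [] → (∀ γ ∈ l, γ ∈ pos) →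
      l.sum = β' - β →
      ∃ l' : List V, l' ≠ [] ∧ (∀ γ ∈ l', γ ∈ pos) ∧
        l'.Pairwise (fun x y => ⟪x, y⟫ = 0) ∧ l'.sum = β' - β by
    exact H l0.length l0 le_rfl hne0 hmem0 hsum0
  intro n
  induction n with
  | zero =>
    intro l hl hne
    rw [Nat.le_zero, List.length_eq_zero_iff] at hl
    exact absurd hl hne
  | succ n ih =>
    intro l hlen hne hmem hsum
    by_cases hnn : l.Pairwise (fun x y => 0 ≤ ⟪x, y⟫)
    · -- all pairs nonnegative
      by_cases horth : l.Pairwise (fun x y => ⟪x, y⟫ = 0)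
      · exact ⟨l, hne, hmem, horth, hsum⟩
      · exfalso
        have hex : ∃ a b : V, [a, b].Sublist l ∧ ⟪a, b⟫ ≠ 0 := by
          by_contra hcon
          push_neg at hcon
          exact horth (List.pairwise_iff_forall_sublist.mpr fun {a b} hs => hcon a b hs)
        obtain ⟨a, b, hab, habne⟩ := hex
        have habpos : 0 < ⟪a, b⟫ :=
          lt_of_le_of_ne (List.pairwise_iff_forall_sublist.mp hnn hab) (Ne.symm habne)
        obtain ⟨r, hperm⟩ := hab.exists_perm_append
        simp only [List.cons_append, List.nil_append] at hperm
        -- hperm : l ~ a :: b :: r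
        have haP : a ∈ pos := hmem a (hperm.mem_iff.mpr (by simp))
        have hbP : b ∈ pos := hmem b (hperm.mem_iff.mpr (by simp))
        have hrP : ∀ γ ∈ r, γ ∈ pos := fun γ hγ =>
          hmem γ (hperm.mem_iff.mpr (by simp [hγ]))
        have haΦ : a ∈ Φ := hpos.subset haP
        have hbΦ : b ∈ Φ := hpos.subset hbP
        have hnn' : (a :: b :: r).Pairwise (fun x y => 0 ≤ ⟪x, y⟫) :=
          (hperm.pairwise_iff (fun {x y} hxy => by rwa [real_inner_comm])).mp hnn
        rw [List.pairwise_cons] at hnn'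
        obtain ⟨ha1, hnn''⟩ := hnn'
        rw [List.pairwise_cons] at hnn''
        obtain ⟨hb1, _⟩ := hnn''
        have hsum' : (a :: b :: r).sum = β' - β := by
          rw [← hperm.sum_eq]; exact hsum
        -- ⟪r.sum, a⟫ ≥ 0
        have hra : 0 ≤ ⟪r.sum, a⟫ := by
          rw [aux_inner_list_sum]
          apply List.sum_nonneg
          intro x hx
          simp only [List.mem_map] at hx
          obtain ⟨γ, hγ, rfl⟩ := hx
          rw [real_inner_comm]
          exact ha1 γ (by simp [hγ])
        have hrb : 0 ≤ ⟪r.sum, b⟫ := by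
          rw [aux_inner_list_sum]
          apply List.sum_nonneg
          intro x hx
          simp only [List.mem_map] at hx
          obtain ⟨γ, hγ, rfl⟩ := hx
          rw [real_inner_comm]
          exact hb1 γ hγ
        -- ⟪a,b⟫ ≥ c/2 by integrality
        obtain ⟨m, hm⟩ := hint a haΦ b hbΦ
        have hm1 : (1 : ℝ) ≤ (m : ℝ) := by
          have : (0:ℝ) < (m : ℝ) * c := by rw [← hm]; linarith
          have hmpos : (0:ℝ) < (m:ℝ) := by
            by_contra hcon; push_neg at hcon; nlinarith
          have : (0:ℤ) < m := by exact_mod_cast hmpos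
          exact_mod_cast this
        have habge : c / 2 ≤ ⟪a, b⟫ := by nlinarith
        -- total inner product with a
        have hsl : ⟪(a :: b :: r).sum, a⟫ = ⟪a, a⟫ + ⟪b, a⟫ + ⟪r.sum, a⟫ := by
          simp only [List.sum_cons, inner_add_left]; ring
        have hlow : c + c / 2 ≤ ⟪β' - β, a⟫ := by
          rw [← hsum', hsl, hnorm a haΦ]
          have hcomm : ⟪b, a⟫ = ⟪a, b⟫ := (real_inner_comm b a).symm
          linarith
        rw [inner_sub_left] at hlow
        obtain ⟨n', hn'⟩ := hint β' hβ'Φ a haΦ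
        obtain ⟨nβ, hnβ⟩ := hint β hβΦ a haΦ
        -- β ≠ -a
        have hβna : β ≠ -a := by
          rintro rfl; exact hpos.not_both a haP (by simpa using hβ)
        have hβa_gt : -c < ⟪β, a⟫ := by
          rcases (aux_neg_le_inner (hnorm β hβΦ) (hnorm a haΦ)).1.lt_or_eq with h1 | h1
          · exact h1
          · exact absurd ((aux_neg_le_inner (hnorm β hβΦ) (hnorm a haΦ)).2 h1.symm) hβna
        have hnβge : (-1 : ℝ) ≤ (nβ : ℝ) := by
          have : (-2 : ℝ) * c < (nβ : ℝ) * c := by rw [← hnβ]; linarith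
          have h2 : (-2 : ℝ) < (nβ : ℝ) := by nlinarith
          have : (-2 : ℤ) < nβ := by exact_mod_cast h2
          have : (-1 : ℤ) ≤ nβ := by omega
          exact_mod_cast this
        have hn'ge : (2 : ℝ) ≤ (n' : ℝ) := by
          have h3 : (3 : ℝ) * c ≤ ((n' : ℝ) - (nβ : ℝ)) * c := by
            have := hn'; have := hnβ; nlinarith
          have h4 : (3 : ℝ) ≤ (n' : ℝ) - (nβ : ℝ) := by nlinarith
          linarith
        have hβ'a_le : ⟪β', a⟫ ≤ c := (aux_inner_le (hnorm β' hβ'Φ) (hnorm a haΦ)).1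
        have hβ'a_eq : ⟪β', a⟫ = c := by nlinarith
        have hβ'eq : β' = a := (aux_inner_le (hnorm β' hβ'Φ) (hnorm a haΦ)).2 hβ'a_eq
        -- then b :: r sums to -β
        have htsum : (b :: r).sum = -β := by
          have : a + (b :: r).sum = β' - β := by simpa using hsum'
          rw [hβ'eq] at this
          linear_combination (norm := module) this
        have hcb : ⟪(b :: r).sum, b⟫ = ⟪b, b⟫ + ⟪r.sum, b⟫ := by
          simp only [List.sum_cons, inner_add_left]
        have hβb : ⟪β, b⟫ ≤ -c := by
          have h5 : c ≤ ⟪(b :: r).sum, b⟫ := by rw [hcb, hnorm b hbΦ]; linarith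
          rw [htsum, inner_neg_left] at h5
          linarith
        have hβb_ge : -c ≤ ⟪β, b⟫ := (aux_neg_le_inner (hnorm β hβΦ) (hnorm b hbΦ)).1
        have hβb_eq : β = -b := (aux_neg_le_inner (hnorm β hβΦ) (hnorm b hbΦ)).2 (le_antisymm hβb hβb_ge)
        have : -β = b := by rw [hβb_eq]; simp
        exact hpos.not_both β hβ (this ▸ hbP)
    · -- some pair has negative inner product: merge
      have hex : ∃ a b : V, [a, b].Sublist l ∧ ⟪a, b⟫ < 0 := by
        by_contra hcon
        push_neg at hcon
        exact hnn (List.pairwise_iff_forall_sublist.mpr fun {a b} hs => hcon a b hs)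
      obtain ⟨a, b, hab, habneg⟩ := hex
      obtain ⟨r, hperm⟩ := hab.exists_perm_append
      simp only [List.cons_append, List.nil_append] at hperm
      have haP : a ∈ pos := hmem a (hperm.mem_iff.mpr (by simp))
      have hbP : b ∈ pos := hmem b (hperm.mem_iff.mpr (by simp))
      have habP : a + b ∈ pos := hmerge a haP b hbP habneg
      have hrP : ∀ γ ∈ r, γ ∈ pos := fun γ hγ => hmem γ (hperm.mem_iff.mpr (by simp [hγ]))
      refine ih ((a + b) :: r) ?_ (by simp) ?_ ?_
      · have : l.length = r.length + 2 := by rw [hperm.length_eq]; simp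
        simp only [List.length_cons]
        omega
      · intro γ hγ
        rcases List.mem_cons.mp hγ with h1 | h1
        · exact h1 ▸ habP
        · exact hrP γ h1
      · have : (a :: b :: r).sum = β' - β := by rw [← hperm.sum_eq]; exact hsum
        simp only [List.sum_cons] at this ⊢
        linear_combination (norm := module) this
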